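/- Let ε > 0 and 0 < ε' < ε. Let θ be uniformly distributed on [-1/2, 1/2]^d, defining the randomly shifted lattice quantizer Q(x) = ε(θ + argmin_{j ∈ ℤ^d} ‖x - ε(θ+j)‖₂). For any fixed point x ∈ ℝ^d, the probability (over θ) that the quantization image of the Euclidean ball B_{ε'}(x) is not equal to the singleton {Q(x)} is at most 2dε'/ε. -/

import Mathlib

open MeasureTheory

/-- The randomly shifted lattice quantizer: each coordinate of `x` is mapped to the
nearest point of the lattice `ε(θᵢ + ℤ)`, i.e. `Q(x) = ε(θ + argmin_{j ∈ ℤ^d} ‖x - ε(θ+j)‖₂)`,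
which over a product lattice is coordinatewise rounding. -/
noncomputable def latticeQuantizer (d : ℕ) (ε : ℝ) (θ x : EuclideanSpace ℝ (Fin d)) :
    EuclideanSpace ℝ (Fin d) :=
  WithLp.toLp 2 (fun i => ε * (θ i + round (x i / ε - θ i)))

/-- If `a` is not within `δ` of the half-integer grid (in the one-sided sense below),
then every point within `δ` of `a` rounds to the same integer as `a`. -/
lemma round_eq_of_near (a s δ : ℝ) (hδ : 0 < δ)
    (h : ¬ ∃ m : ℤ, (m : ℝ) - 1/2 - δ ≤ a ∧ a < (m : ℝ) - 1/2 + δ)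
    (hs : |s - a| ≤ δ) : round s = round a := by
  rw [abs_sub_le_iff] at hs
  by_contra hne
  rw [round_eq, round_eq] at hne
  rcases lt_or_gt_of_ne hne with hlt | hlt
  · refine h ⟨⌊a + 1/2⌋, ?_, ?_⟩
    · have := Int.floor_le (a + 1/2); linarith
    · have h1 : s + 1/2 < ⌊s + 1/2⌋ + 1 := Int.lt_floor_add_one _
      have h2 : (⌊s + 1/2⌋ : ℝ) + 1 ≤ ⌊a + 1/2⌋ := by exact_mod_cast Int.add_one_le_iff.mpr hlt
      linarith [hs.2]
  · refine h ⟨⌊s + 1/2⌋, ?_, ?_⟩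
    · have := Int.floor_le (s + 1/2); linarith [hs.1]
    · have h1 : a + 1/2 < ⌊a + 1/2⌋ + 1 := Int.lt_floor_add_one _
      have h2 : (⌊a + 1/2⌋ : ℝ) + 1 ≤ ⌊s + 1/2⌋ := by exact_mod_cast Int.add_one_le_iff.mpr hlt
      linarith

/-- Each coordinate difference is bounded by the Euclidean distance. -/
lemma coord_dist_le {d : ℕ} (y x : EuclideanSpace ℝ (Fin d)) (i : Fin d) :
    |y i - x i| ≤ dist y x := by
  rw [EuclideanSpace.dist_eq, ← Real.sqrt_sq_eq_abs]
  apply Real.sqrt_le_sqrt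
  have := Finset.single_le_sum (f := fun j => dist (y j) (x j) ^ 2)
    (fun j _ => sq_nonneg _) (Finset.mem_univ i)
  simpa [Real.dist_eq] using this

/-- for `θ` uniform on `[-1/2,1/2]^d`, the probability that the quantization
image of the ball `B_{ε'}(x)` is not the singleton `{Q(x)}` is at most `2dε'/ε`. -/
theorem stmt_1 (d : ℕ) (hd : 1 ≤ d) (ε ε' : ℝ) (hε : 0 < ε) (hε'0 : 0 < ε') (hε' : ε' < ε)
    (x : EuclideanSpace ℝ (Fin d))
    (cube : Set (EuclideanSpace ℝ (Fin d)))
    (hcube : cube = WithLp.ofLp ⁻¹' (Set.univ.pi fun _ => Set.Icc (-(1:ℝ) / 2) (1 / 2)))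
    (μ : Measure (EuclideanSpace ℝ (Fin d)))
    (hμ : μ = (volume cube)⁻¹ • volume.restrict cube) :
    μ {θ | latticeQuantizer d ε θ '' Metric.closedBall x ε' ≠ {latticeQuantizer d ε θ x}}
      ≤ ENNReal.ofReal (2 * d * ε' / ε) := by
  set δ : ℝ := ε' / ε with hδdef
  have hδ0 : 0 < δ := div_pos hε'0 hε
  set e := (MeasurableEquiv.toLp 2 (Fin d → ℝ)).symm with he
  have hmp := EuclideanSpace.volume_preserving_symm_measurableEquiv_toLp (Fin d)
  have hcube' : cube = ⇑e ⁻¹' (Set.univ.pi fun _ : Fin d => Set.Icc (-(1:ℝ)/2) (1/2)) := hcube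
  have hIccvol : volume (Set.Icc (-(1:ℝ)/2) (1/2)) = 1 := by
    rw [Real.volume_Icc]; norm_num
  have hcubevol : volume cube = 1 := by
    rw [hcube', hmp.measure_preimage
      (MeasurableSet.univ_pi fun _ => measurableSet_Icc).nullMeasurableSet, volume_pi_pi]
    simp only [hIccvol, Finset.prod_const, one_pow]
  have hcubem : MeasurableSet cube :=
    hcube' ▸ (e.measurable (MeasurableSet.univ_pi fun _ => measurableSet_Icc))
  have hμs : ∀ s : Set (EuclideanSpace ℝ (Fin d)), μ s = volume (s ∩ cube) := by
    intro s
    rw [hμ, Measure.smul_apply, Measure.restrict_apply' hcubem, hcubevol, inv_one, one_smul]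
  set A : Fin d → Set (EuclideanSpace ℝ (Fin d)) := fun i =>
    {θ | ∃ m : ℤ, (m : ℝ) - 1/2 - δ ≤ x i / ε - θ i ∧ x i / ε - θ i < (m : ℝ) - 1/2 + δ} with hA
  have hsub : {θ | latticeQuantizer d ε θ '' Metric.closedBall x ε' ≠ {latticeQuantizer d ε θ x}}
      ⊆ ⋃ i, A i := by
    intro θ hθ
    by_contra hA'
    simp only [Set.mem_iUnion, not_exists] at hA'
    apply hθ
    refine Set.Subset.antisymm ?_ ?_
    · rintro _ ⟨y, hy, rfl⟩
      have hQ : latticeQuantizer d ε θ y = latticeQuantizer d ε θ x := by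
        ext i
        have h1 : |y i - x i| ≤ ε' := le_trans (coord_dist_le y x i) (Metric.mem_closedBall.mp hy)
        have h2 : |(y i / ε - θ i) - (x i / ε - θ i)| ≤ δ := by
          have heq : (y i / ε - θ i) - (x i / ε - θ i) = (y i - x i) / ε := by ring
          rw [heq, hδdef, abs_div, abs_of_pos hε]
          gcongr
        have hr := round_eq_of_near (x i / ε - θ i) (y i / ε - θ i) δ hδ0 (hA' i) h2
        simp only [latticeQuantizer, hr]
      rw [hQ]; rfl
    · intro z hz
      rw [Set.mem_singleton_iff] at hz
      exact ⟨x, Metric.mem_closedBall_self hε'0.le, hz ▸ rfl⟩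
  rcases le_or_gt 1 (2 * δ) with hbig | hsmall
  · calc μ {θ | latticeQuantizer d ε θ '' Metric.closedBall x ε' ≠ {latticeQuantizer d ε θ x}}
        ≤ μ Set.univ := measure_mono (Set.subset_univ _)
      _ = 1 := by rw [hμs, Set.univ_inter, hcubevol]
      _ ≤ ENNReal.ofReal (2 * d * ε' / ε) := by
          rw [ENNReal.one_le_ofReal]
          have hd1 : (1:ℝ) ≤ d := by exact_mod_cast hd
          have h2 : 2 * (d:ℝ) * ε' / ε = (d:ℝ) * (2 * δ) := by
            rw [hδdef]; field_simp
          rw [h2]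
          nlinarith
  -- main case : 2δ < 1
  have hAi : ∀ i, μ (A i) ≤ ENNReal.ofReal (2 * δ) := by
    intro i
    set c : ℝ := x i / ε with hc
    set m₀ : ℤ := ⌈c - δ⌉ with hm₀
    set α : ℝ := c - m₀ + 1/2 with hα
    set I : Set ℝ := Set.Icc (-(1:ℝ)/2) (1/2) with hI
    set J : Set ℝ := Set.Ioc (α - δ) (α + δ) with hJ
    set J' : Set ℝ := Set.Ioc (α - 1 - δ) (α - 1 + δ) with hJ'
    set K : Set ℝ := (J ∪ J') ∩ I with hK
    have hKmeas : MeasurableSet K :=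
      ((measurableSet_Ioc.union measurableSet_Ioc).inter measurableSet_Icc)
    have hsubK : A i ∩ cube ⊆
        ⇑e ⁻¹' (Set.univ.pi (Function.update (fun _ : Fin d => I) i K)) := by
      rintro θ ⟨⟨m, hm1, hm2⟩, hθc⟩
      rw [hcube] at hθc
      intro j _
      show θ j ∈ Function.update (fun _ : Fin d => I) i K j
      by_cases hj : j = i
      · subst hj
        rw [Function.update_self]
        have htI : θ j ∈ Set.Icc (-(1:ℝ)/2) (1/2) := hθc j (Set.mem_univ j)
        obtain ⟨htIl, htIr⟩ := htI
        refine ⟨?_, htIl, htIr⟩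
        have ht1 : c - (m:ℝ) + 1/2 - δ < θ j := by linarith
        have ht2 : θ j ≤ c - (m:ℝ) + 1/2 + δ := by linarith
        have hmlb : m₀ ≤ m := by
          have hcm : c - δ ≤ (m:ℝ) := by linarith
          exact Int.ceil_le.mpr hcm
        have hmub : m ≤ m₀ + 1 := by
          have hcm₀ : c - δ ≤ (m₀:ℝ) := Int.le_ceil _
          have : (m:ℝ) < (m₀:ℝ) + 2 := by linarith
          have : m < m₀ + 2 := by exact_mod_cast this
          omega
        have hmcase : m = m₀ ∨ m = m₀ + 1 := by omega
        rcases hmcase with rfl | rfl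
        · left; exact ⟨by rw [hα]; linarith, by rw [hα]; linarith⟩
        · right
          constructor
          · rw [hα]; push_cast; push_cast at ht1; linarith
          · rw [hα]; push_cast; push_cast at ht2; linarith
      · rw [Function.update_of_ne hj]
        exact hθc j (Set.mem_univ j)
    have hJvol : volume J = ENNReal.ofReal (2 * δ) := by
      rw [hJ, Real.volume_Ioc]; ring_nf
    have hJ'trans : J' ∩ I = (fun t : ℝ => t + 1) ⁻¹' (J ∩ Set.Icc ((1:ℝ)/2) (3/2)) := by
      ext t
      simp only [hJ, hJ', hI, Set.mem_inter_iff, Set.mem_Ioc, Set.mem_Icc, Set.mem_preimage]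
      constructor
      · rintro ⟨⟨u1, u2⟩, u3, u4⟩
        exact ⟨⟨by linarith, by linarith⟩, by linarith, by linarith⟩
      · rintro ⟨⟨u1, u2⟩, u3, u4⟩
        exact ⟨⟨by linarith, by linarith⟩, by linarith, by linarith⟩
    have hKvol : volume K ≤ ENNReal.ofReal (2 * δ) := by
      have hsplit : K = (J ∩ I) ∪ (J' ∩ I) := by
        rw [hK, Set.union_inter_distrib_right]
      have step1 : volume K ≤ volume (J ∩ I) + volume (J ∩ Set.Icc ((1:ℝ)/2) (3/2)) := by
        rw [hsplit]
        refine le_trans (measure_union_le _ _) ?_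
        rw [hJ'trans, measure_preimage_add_right]
      have step2 : volume (J ∩ I) + volume (J ∩ Set.Icc ((1:ℝ)/2) (3/2))
          = volume ((J ∩ I) ∪ (J ∩ Set.Icc ((1:ℝ)/2) (3/2)))
            + volume ((J ∩ I) ∩ (J ∩ Set.Icc ((1:ℝ)/2) (3/2))) :=
        (measure_union_add_inter _ (measurableSet_Ioc.inter measurableSet_Icc)).symm
      have step3 : volume ((J ∩ I) ∪ (J ∩ Set.Icc ((1:ℝ)/2) (3/2))) ≤ volume J := by
        apply measure_mono
        rintro t (⟨h1, _⟩ | ⟨h1, _⟩) <;> exact h1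
      have step4 : volume ((J ∩ I) ∩ (J ∩ Set.Icc ((1:ℝ)/2) (3/2))) = 0 := by
        have : (J ∩ I) ∩ (J ∩ Set.Icc ((1:ℝ)/2) (3/2)) ⊆ {(1:ℝ)/2} := by
          rintro t ⟨⟨_, _, ht1⟩, _, ht2, _⟩
          simp only [Set.mem_singleton_iff]
          linarith
        exact le_antisymm (le_trans (measure_mono this) (by simp)) zero_le
      calc volume K ≤ volume (J ∩ I) + volume (J ∩ Set.Icc ((1:ℝ)/2) (3/2)) := step1
        _ = _ + _ := step2
        _ ≤ volume J + 0 := add_le_add step3 (le_of_eq step4)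
        _ = ENNReal.ofReal (2 * δ) := by rw [add_zero, hJvol]
    have hpimeas : MeasurableSet (Set.univ.pi (Function.update (fun _ : Fin d => I) i K)) := by
      refine MeasurableSet.univ_pi fun j => ?_
      by_cases hj : j = i
      · subst hj; rw [Function.update_self]; exact hKmeas
      · rw [Function.update_of_ne hj]; exact measurableSet_Icc
    calc μ (A i) = volume (A i ∩ cube) := hμs _
      _ ≤ volume (⇑e ⁻¹' (Set.univ.pi (Function.update (fun _ : Fin d => I) i K))) :=
          measure_mono hsubK
      _ = volume (Set.univ.pi (Function.update (fun _ : Fin d => I) i K)) :=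
          hmp.measure_preimage hpimeas.nullMeasurableSet
      _ = ∏ j, volume (Function.update (fun _ : Fin d => I) i K j) := volume_pi_pi _
      _ = volume K := by
          rw [Finset.prod_eq_single i
            (fun j _ hj => by rw [Function.update_of_ne hj]; exact hIccvol)
            (fun h => absurd (Finset.mem_univ i) h)]
          rw [Function.update_self]
      _ ≤ ENNReal.ofReal (2 * δ) := hKvol
  calc μ {θ | latticeQuantizer d ε θ '' Metric.closedBall x ε' ≠ {latticeQuantizer d ε θ x}}
      ≤ μ (⋃ i, A i) := measure_mono hsub
    _ ≤ ∑ i, μ (A i) := measure_iUnion_fintype_le μ A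
    _ ≤ ∑ _i : Fin d, ENNReal.ofReal (2 * δ) := Finset.sum_le_sum fun i _ => hAi i
    _ = (d : ENNReal) * ENNReal.ofReal (2 * δ) := by
        rw [Finset.sum_const, Finset.card_univ, Fintype.card_fin, nsmul_eq_mul]
    _ = ENNReal.ofReal (2 * d * ε' / ε) := by
        rw [← ENNReal.ofReal_natCast d, ← ENNReal.ofReal_mul (by positivity)]
        congr 1
        rw [hδdef]
        field_simp
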